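/- Let W be a Cl(n,1)-module with a compatible positive definite inner product as above, φ ∈ W nonzero, and V ∈ ℝ^{n,1} with V · φ = 0 (Clifford multiplication). Then V is a scalar multiple of the Dirac current V_φ, and if moreover V ≠ 0 then V_φ is lightlike: ⟨V_φ, V_φ⟩_{Mink} = 0. -/

import Mathlib

/-!
Write `V = x + t e₀` with `x` spatial, so that `V · φ = 0` says `x · φ = -t e₀ · φ`. For spatial
`y`, anticommuting `e₀` past `y` and substituting gives `t ⟨V_φ, y⟩ = -⟨y · x · φ, φ⟩`.
Skew-adjointness of spatial vectors makes `⟨y · x · φ, φ⟩` symmetric in `x, y`, so it is half of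
`⟨(xy + yx) · φ, φ⟩ = -2 ⟨x, y⟩ |φ|²`. With `X = e₀` the time component of `V_φ` is `|φ|²`, and
altogether `t V_φ = |φ|² V`. Finally `0 = V · V · φ = -⟨V, V⟩ φ`, so a nonzero `V` is lightlike,
and then so is its nonzero multiple `V_φ`.
-/

open scoped RealInnerProductSpace

/-- The Minkowski bilinear form of signature (n,1) on ℝ^{n,1} = ℝⁿ ⊕ ℝe₀. -/
noncomputable def mink {n : ℕ} (v w : EuclideanSpace ℝ (Fin n) × ℝ) : ℝ :=
  ⟪v.1, w.1⟫ - v.2 * w.2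

/-- The future unit timelike vector e₀. -/
noncomputable def e0 (n : ℕ) : EuclideanSpace ℝ (Fin n) × ℝ := (0, 1)

section Minkowski

variable {n : ℕ}

theorem mink_symm (v w : EuclideanSpace ℝ (Fin n) × ℝ) : mink v w = mink w v := by
  unfold mink; rw [real_inner_comm]; ring

theorem mink_add_left (u v w : EuclideanSpace ℝ (Fin n) × ℝ) :
    mink (u + v) w = mink u w + mink v w := by
  unfold mink; simp only [Prod.fst_add, Prod.snd_add, inner_add_left]; ring

theorem mink_smul_left (c : ℝ) (v w : EuclideanSpace ℝ (Fin n) × ℝ) :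
    mink (c • v) w = c * mink v w := by
  unfold mink; simp only [Prod.smul_fst, Prod.smul_snd, real_inner_smul_left, smul_eq_mul]; ring

theorem mink_smul_right (c : ℝ) (v w : EuclideanSpace ℝ (Fin n) × ℝ) :
    mink v (c • w) = c * mink v w := by
  rw [mink_symm, mink_smul_left, mink_symm]

theorem mink_add_self (v w : EuclideanSpace ℝ (Fin n) × ℝ) :
    mink (v + w) (v + w) = mink v v + 2 * mink v w + mink w w := by
  rw [mink_add_left, mink_symm v (v + w), mink_symm w (v + w), mink_add_left, mink_add_left,
    mink_symm w v]
  ring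

theorem mink_e0_spatial (y : EuclideanSpace ℝ (Fin n)) : mink (e0 n) (y, 0) = 0 := by
  simp [mink, e0]

theorem mink_e0_e0 : mink (e0 n) (e0 n) = -1 := by
  simp [mink, e0]

theorem mink_spatial_right (v : EuclideanSpace ℝ (Fin n) × ℝ) (y : EuclideanSpace ℝ (Fin n)) :
    mink v (y, 0) = ⟪v.1, y⟫ := by
  simp [mink]

theorem eq_spatial_add_smul_e0 (v : EuclideanSpace ℝ (Fin n) × ℝ) : v = (v.1, 0) + v.2 • e0 n := by
  simp [e0]

end Minkowski

section CliffordModule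

variable {n : ℕ} {W : Type*} [NormedAddCommGroup W] [InnerProductSpace ℝ W]
  {cm : (EuclideanSpace ℝ (Fin n) × ℝ) →ₗ[ℝ] Module.End ℝ W}

theorem clifford_anticomm (hcl : ∀ v (ψ : W), cm v (cm v ψ) = -(mink v v) • ψ)
    (v w : EuclideanSpace ℝ (Fin n) × ℝ) (ψ : W) :
    cm v (cm w ψ) + cm w (cm v ψ) = -(2 * mink v w) • ψ := by
  have h := hcl (v + w) ψ
  simp only [map_add, LinearMap.add_apply, hcl v ψ, hcl w ψ, mink_add_self] at h
  linear_combination (norm := module) h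

theorem e0_clifford_spatial (hcl : ∀ v (ψ : W), cm v (cm v ψ) = -(mink v v) • ψ)
    (y : EuclideanSpace ℝ (Fin n)) (ψ : W) :
    cm (e0 n) (cm (y, 0) ψ) = -cm (y, 0) (cm (e0 n) ψ) := by
  have h := clifford_anticomm hcl (e0 n) (y, 0) ψ
  rw [mink_e0_spatial, mul_zero, neg_zero, zero_smul] at h
  exact eq_neg_of_add_eq_zero_left h

theorem inner_clifford_spatial_spatial (hcl : ∀ v (ψ : W), cm v (cm v ψ) = -(mink v v) • ψ)
    (hsp : ∀ (x : EuclideanSpace ℝ (Fin n)) (ψ χ : W),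
      ⟪cm (x, (0:ℝ)) ψ, χ⟫ = -⟪ψ, cm (x, (0:ℝ)) χ⟫)
    (x y : EuclideanSpace ℝ (Fin n)) (φ : W) :
    ⟪cm (y, 0) (cm (x, 0) φ), φ⟫ = -(⟪x, y⟫ * ⟪φ, φ⟫) := by
  have hsymm : ⟪cm (x, 0) (cm (y, 0) φ), φ⟫ = ⟪cm (y, 0) (cm (x, 0) φ), φ⟫ := by
    rw [hsp x, hsp y (cm (x, 0) φ), real_inner_comm (cm (x, 0) φ)]
  have h := congrArg (⟪·, φ⟫) (clifford_anticomm hcl (x, 0) (y, 0) φ)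
  simp only [inner_add_left, real_inner_smul_left, hsymm, mink_spatial_right] at h
  linarith

variable {φ : W} {Vφ : EuclideanSpace ℝ (Fin n) × ℝ}

theorem diracCurrent_snd (hcl : ∀ v (ψ : W), cm v (cm v ψ) = -(mink v v) • ψ)
    (hV : ∀ X, mink Vφ X = -⟪cm (e0 n) (cm X φ), φ⟫) : Vφ.2 = ⟪φ, φ⟫ := by
  have h := hV (e0 n)
  rw [hcl, mink_e0_e0, neg_neg, one_smul] at h
  simp only [mink, e0, inner_zero_right] at h
  linarith

theorem snd_smul_diracCurrent_fst (hcl : ∀ v (ψ : W), cm v (cm v ψ) = -(mink v v) • ψ)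
    (hsp : ∀ (x : EuclideanSpace ℝ (Fin n)) (ψ χ : W),
      ⟪cm (x, (0:ℝ)) ψ, χ⟫ = -⟪ψ, cm (x, (0:ℝ)) χ⟫)
    (hV : ∀ X, mink Vφ X = -⟪cm (e0 n) (cm X φ), φ⟫)
    {V : EuclideanSpace ℝ (Fin n) × ℝ} (hVφ0 : cm V φ = 0) :
    V.2 • Vφ.1 = ⟪φ, φ⟫ • V.1 := by
  have htime : V.2 • cm (e0 n) φ = -cm (V.1, 0) φ := by
    rw [eq_spatial_add_smul_e0 V, map_add, map_smul, LinearMap.add_apply,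
      LinearMap.smul_apply] at hVφ0
    exact eq_neg_of_add_eq_zero_right hVφ0
  refine ext_inner_right ℝ fun y ↦ ?_
  calc ⟪V.2 • Vφ.1, y⟫ = V.2 * mink Vφ (y, 0) := by
        rw [real_inner_smul_left, mink_spatial_right]
    _ = ⟪cm (y, 0) (V.2 • cm (e0 n) φ), φ⟫ := by
        rw [hV, e0_clifford_spatial hcl, map_smul, real_inner_smul_left, inner_neg_left, neg_neg]
    _ = ⟪⟪φ, φ⟫ • V.1, y⟫ := by
        rw [htime, map_neg, inner_neg_left, inner_clifford_spatial_spatial hcl hsp,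
          real_inner_smul_left]
        ring

theorem eq_smul_diracCurrent (hcl : ∀ v (ψ : W), cm v (cm v ψ) = -(mink v v) • ψ)
    (hsp : ∀ (x : EuclideanSpace ℝ (Fin n)) (ψ χ : W),
      ⟪cm (x, (0:ℝ)) ψ, χ⟫ = -⟪ψ, cm (x, (0:ℝ)) χ⟫)
    (hφ : φ ≠ 0) (hV : ∀ X, mink Vφ X = -⟪cm (e0 n) (cm X φ), φ⟫)
    {V : EuclideanSpace ℝ (Fin n) × ℝ} (hVφ0 : cm V φ = 0) :
    V = (V.2 / ⟪φ, φ⟫) • Vφ := by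
  have hnorm : ⟪φ, φ⟫ ≠ 0 := inner_self_ne_zero.mpr hφ
  refine Prod.ext ?_ ?_
  · rw [Prod.smul_fst, div_eq_inv_mul, mul_smul, snd_smul_diracCurrent_fst hcl hsp hV hVφ0,
      inv_smul_smul₀ hnorm]
  · rw [Prod.smul_snd, diracCurrent_snd hcl hV, smul_eq_mul, div_mul_cancel₀ _ hnorm]

theorem mink_self_eq_zero_of_clifford_eq_zero
    (hcl : ∀ v (ψ : W), cm v (cm v ψ) = -(mink v v) • ψ) (hφ : φ ≠ 0)
    {V : EuclideanSpace ℝ (Fin n) × ℝ} (hVφ0 : cm V φ = 0) : mink V V = 0 := by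
  have h := hcl V φ
  rw [hVφ0, map_zero, eq_comm, smul_eq_zero, neg_eq_zero] at h
  exact h.resolve_right hφ

end CliffordModule

theorem annihilating_vector_multiple_of_dirac_current_general (n : ℕ) (W : Type*)
    [NormedAddCommGroup W] [InnerProductSpace ℝ W]
    (cm : (EuclideanSpace ℝ (Fin n) × ℝ) →ₗ[ℝ] Module.End ℝ W)
    (hcl : ∀ v (ψ : W), cm v (cm v ψ) = -(mink v v) • ψ)
    (hsp : ∀ (x : EuclideanSpace ℝ (Fin n)) (ψ χ : W),
      ⟪cm (x, (0:ℝ)) ψ, χ⟫ = -⟪ψ, cm (x, (0:ℝ)) χ⟫)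
    (φ : W) (hφ : φ ≠ 0) (Vφ : EuclideanSpace ℝ (Fin n) × ℝ)
    (hV : ∀ X, mink Vφ X = -⟪cm (e0 n) (cm X φ), φ⟫)
    (V : EuclideanSpace ℝ (Fin n) × ℝ) (hVφ0 : cm V φ = 0) :
    (∃ c : ℝ, V = c • Vφ) ∧ (V ≠ 0 → mink Vφ Vφ = 0) := by
  set c := V.2 / ⟪φ, φ⟫
  have hc : V = c • Vφ := eq_smul_diracCurrent hcl hsp hφ hV hVφ0
  refine ⟨⟨c, hc⟩, fun hV0 ↦ ?_⟩
  have hc0 : c ≠ 0 := fun h ↦ hV0 (by rw [hc, h, zero_smul])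
  have hVV := mink_self_eq_zero_of_clifford_eq_zero hcl hφ hVφ0
  rw [hc, mink_smul_left, mink_smul_right] at hVV
  simpa [hc0] using hVV

/-- if φ ≠ 0 and V · φ = 0 then V is a scalar multiple of the Dirac
current V_φ; if moreover V ≠ 0, then V_φ is lightlike. -/
theorem annihilating_vector_multiple_of_dirac_current (n : ℕ) (W : Type*)
    [NormedAddCommGroup W] [InnerProductSpace ℝ W]
    (cm : (EuclideanSpace ℝ (Fin n) × ℝ) →ₗ[ℝ] Module.End ℝ W)
    (hcl : ∀ v (ψ : W), cm v (cm v ψ) = -(mink v v) • ψ)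
    (he0 : ∀ ψ χ : W, ⟪cm (e0 n) ψ, χ⟫ = ⟪ψ, cm (e0 n) χ⟫)
    (hsp : ∀ (x : EuclideanSpace ℝ (Fin n)) (ψ χ : W),
      ⟪cm (x, (0:ℝ)) ψ, χ⟫ = -⟪ψ, cm (x, (0:ℝ)) χ⟫)
    (φ : W) (hφ : φ ≠ 0) (Vφ : EuclideanSpace ℝ (Fin n) × ℝ)
    (hV : ∀ X, mink Vφ X = -⟪cm (e0 n) (cm X φ), φ⟫)
    (V : EuclideanSpace ℝ (Fin n) × ℝ) (hVφ0 : cm V φ = 0) :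
    (∃ c : ℝ, V = c • Vφ) ∧ (V ≠ 0 → mink Vφ Vφ = 0) :=
  annihilating_vector_multiple_of_dirac_current_general n W cm hcl hsp φ hφ Vφ hV V hVφ0
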